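/- If p is a polynomial of degree at most K and z₀ ∈ ℝ with |z₀| ≥ 1, then |p(z₀)| ≤ (sup_{z ∈ [−1,1]} |p(z)|) · |T_K(z₀)|, where T_K is the Chebyshev polynomial of the first kind of degree K. -/
import Mathlib

open Polynomial Real Finset

private lemma natDegree_T_le_aux (n : ℕ) :
    (Polynomial.Chebyshev.T ℝ (n : ℤ)).natDegree ≤ n := by
  induction n using Nat.strong_induction_on with
  | _ n ih =>
    match n with
    | 0 => simp [Polynomial.Chebyshev.T_zero]
    | 1 => simp [Polynomial.Chebyshev.T_one]
    | (n+2) =>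
      have h1 := ih (n+1) (by omega)
      have h0 := ih n (by omega)
      have hrw : ((n+2 : ℕ) : ℤ) = (n : ℤ) + 2 := by push_cast; ring
      rw [hrw, Polynomial.Chebyshev.T_add_two]
      refine (natDegree_sub_le _ _).trans ?_
      have h2 : (2 * X * Polynomial.Chebyshev.T ℝ ((n:ℤ) + 1)).natDegree ≤ n + 2 := by
        refine (natDegree_mul_le).trans ?_
        have hx : (2 * X : ℝ[X]).natDegree ≤ 1 := (natDegree_mul_le).trans (by simp)
        have : ((n:ℤ) + 1) = ((n+1 : ℕ) : ℤ) := by push_cast; ring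
        rw [this]
        omega
      have h3 : (Polynomial.Chebyshev.T ℝ (n:ℤ)).natDegree ≤ n + 2 := h0.trans (by omega)
      omega

theorem chebyshev_extremal_growth
    (K : ℕ) (p : Polynomial ℝ) (hdeg : p.natDegree ≤ K)
    (z0 : ℝ) (hz0 : 1 ≤ |z0|) :
    |p.eval z0| ≤ sSup ((fun z => |p.eval z|) '' Set.Icc (-1 : ℝ) 1) *
      |(Polynomial.Chebyshev.T ℝ (K : ℤ)).eval z0| := by
  have hπ := Real.pi_pos
  set v : ℕ → ℝ := fun j => Real.cos (j * π / K) with hv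
  set s : Finset ℕ := Finset.range (K+1) with hs
  have hmem : ∀ j, v j ∈ Set.Icc (-1:ℝ) 1 := fun j =>
    ⟨Real.neg_one_le_cos _, Real.cos_le_one _⟩
  have hanti : ∀ i j : ℕ, i < j → j ≤ K → v j < v i := by
    intro i j hij hjK
    have hK : 0 < K := by omega
    have hKpos : (0:ℝ) < K := by exact_mod_cast hK
    apply Real.cos_lt_cos_of_nonneg_of_le_pi
    · positivity
    · rw [div_le_iff₀ hKpos]
      have : (j:ℝ) ≤ K := by exact_mod_cast hjK
      nlinarith
    · have hij' : (i:ℝ) < j := by exact_mod_cast hij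
      rw [div_lt_div_iff₀ hKpos hKpos]
      nlinarith [mul_pos (mul_pos (sub_pos.mpr hij') hπ) hKpos]
  have hinj : Set.InjOn v s := by
    intro x hx y hy hxy
    simp only [hs, Finset.coe_range, Set.mem_Iio] at hx hy
    rcases lt_trichotomy x y with h | h | h
    · exact absurd hxy (hanti x y h (by omega)).ne'
    · exact h
    · exact absurd hxy (hanti y x h (by omega)).ne
  have hT : ∀ j, j ≤ K → (Polynomial.Chebyshev.T ℝ (K:ℤ)).eval (v j) = (-1:ℝ)^j := by
    intro j hj
    have hc : ∀ m : ℕ, Real.cos (m * π) = (-1:ℝ)^m := by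
      intro m
      have := Real.cos_nat_mul_pi_sub 0 m
      simpa using this
    show (Polynomial.Chebyshev.T ℝ (K:ℤ)).eval (Real.cos (j * π / K)) = (-1:ℝ)^j
    rw [Polynomial.Chebyshev.T_real_cos]
    rcases Nat.eq_zero_or_pos K with hK0 | hK
    · have : j = 0 := by omega
      subst this; subst hK0; simp
    · have hKpos : (K:ℝ) ≠ 0 := by positivity
      have : ((K:ℤ):ℝ) * (j * π / K) = j * π := by
        push_cast; field_simp
      rw [this, hc]
  set M := sSup ((fun z => |p.eval z|) '' Set.Icc (-1:ℝ) 1) with hM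
  have hbdd : BddAbove ((fun z => |p.eval z|) '' Set.Icc (-1:ℝ) 1) :=
    (isCompact_Icc.image (p.continuous.abs)).bddAbove
  have hMle : ∀ x ∈ Set.Icc (-1:ℝ) 1, |p.eval x| ≤ M := fun x hx =>
    le_csSup hbdd ⟨x, hx, rfl⟩
  have hM0 : 0 ≤ M := le_trans (abs_nonneg _) (hMle 0 (by norm_num))
  set a : ℕ → ℝ := fun j => (Lagrange.basis s v j).eval z0 with ha
  set sg : ℝ := if 0 ≤ z0 then 1 else -1 with hsg
  set e : ℝ := sg ^ K with he
  have hsz : ∀ i, 0 ≤ sg * (z0 - v i) := by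
    intro i
    have h1 := (hmem i).1
    have h2 := (hmem i).2
    rcases le_or_gt 0 z0 with h | h
    · have : 1 ≤ z0 := by rwa [abs_of_nonneg h] at hz0
      simp only [hsg, if_pos h]; nlinarith
    · have : z0 ≤ -1 := by rw [abs_of_neg h] at hz0; linarith
      simp only [hsg, if_neg (not_le.mpr h)]; nlinarith
  have key : ∀ j ∈ s, |a j| = e * (-1:ℝ)^j * a j := by
    intro j hj
    have hjK : j ≤ K := by
      simp only [hs, Finset.mem_range] at hj; omega
    have hprod : a j = ∏ i ∈ s.erase j, ((v j - v i)⁻¹ * (z0 - v i)) := by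
      rw [ha]
      simp only [Lagrange.basis, Polynomial.eval_prod]
      refine Finset.prod_congr rfl fun i _ => ?_
      simp [Lagrange.basisDivisor]
    have hcard : (s.erase j).card = K := by
      rw [Finset.card_erase_of_mem hj]; simp [hs]
    have hfilt : (s.erase j).filter (· < j) = Finset.range j := by
      ext x
      simp only [hs, Finset.mem_filter, Finset.mem_erase, Finset.mem_range]
      omega
    have hsigns : e * (-1:ℝ)^j =
        ∏ i ∈ s.erase j, ((if i < j then (-1:ℝ) else 1) * sg) := by
      rw [Finset.prod_mul_distrib, Finset.prod_const, hcard, ← he,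
        Finset.prod_ite, Finset.prod_const, Finset.prod_const, hfilt,
        Finset.card_range]
      ring
    have hnn : 0 ≤ e * (-1:ℝ)^j * a j := by
      rw [hprod, mul_assoc, ← mul_assoc, hsigns, ← Finset.prod_mul_distrib]
      · refine Finset.prod_nonneg fun i hi => ?_
        have hi' : i ∈ s ∧ i ≠ j := by
          rw [Finset.mem_erase] at hi; exact ⟨hi.2, hi.1⟩
        have hiK : i ≤ K := by
          have := hi'.1; simp only [hs, Finset.mem_range] at this; omega
        rcases lt_or_gt_of_ne hi'.2 with hij | hij
        · have hlt : v j < v i := hanti i j hij hjK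
          have hinv : (v j - v i)⁻¹ ≤ 0 := inv_nonpos.mpr (by linarith)
          have : (if i < j then (-1:ℝ) else 1) = -1 := if_pos hij
          rw [this]
          have := hsz i
          calc (0:ℝ) ≤ (-(v j - v i)⁻¹) * (sg * (z0 - v i)) := by
                apply mul_nonneg (by linarith) (hsz i)
            _ = -1 * sg * ((v j - v i)⁻¹ * (z0 - v i)) := by ring
        · have hlt : v i < v j := hanti j i hij hiK
          have hinv : 0 ≤ (v j - v i)⁻¹ := inv_nonneg.mpr (by linarith)
          have : (if i < j then (-1:ℝ) else 1) = 1 := if_neg (by omega)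
          rw [this]
          calc (0:ℝ) ≤ (v j - v i)⁻¹ * (sg * (z0 - v i)) :=
                mul_nonneg hinv (hsz i)
            _ = 1 * sg * ((v j - v i)⁻¹ * (z0 - v i)) := by ring
    have hsga : |sg| = 1 := by
      rcases le_or_gt 0 z0 with h | h
      · simp [hsg, h]
      · simp [hsg, not_le.mpr h]
    have habs : |e * (-1:ℝ)^j| = 1 := by
      rw [abs_mul, he, abs_pow, hsga, abs_pow]; simp
    calc |a j| = |e * (-1:ℝ)^j| * |a j| := by rw [habs, one_mul]
      _ = |e * (-1:ℝ)^j * a j| := (abs_mul _ _).symm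
      _ = e * (-1:ℝ)^j * a j := abs_of_nonneg hnn
  have hscard : s.card = K + 1 := by simp [hs]
  have hdeg' : ∀ q : ℝ[X], q.natDegree ≤ K → q.degree < s.card := by
    intro q hq
    have h1 : q.degree ≤ (K :WithBot ℕ) :=
      le_trans degree_le_natDegree (by exact_mod_cast hq)
    refine h1.trans_lt ?_
    rw [hscard]
    exact_mod_cast Nat.lt_succ_self K
  have hp_eq : p.eval z0 = ∑ j ∈ s, p.eval (v j) * a j := by
    conv_lhs => rw [Lagrange.eq_interpolate hinj (hdeg' p hdeg)]
    simp [Lagrange.interpolate_apply, Polynomial.eval_finset_sum, ha]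
  have hT_eq : (Polynomial.Chebyshev.T ℝ (K:ℤ)).eval z0 = ∑ j ∈ s, (-1:ℝ)^j * a j := by
    conv_lhs => rw [Lagrange.eq_interpolate hinj
      (hdeg' _ (natDegree_T_le_aux K))]
    rw [Lagrange.interpolate_apply, Polynomial.eval_finset_sum]
    refine Finset.sum_congr rfl fun j hj => ?_
    have hjK : j ≤ K := by simp only [hs, Finset.mem_range] at hj; omega
    rw [Polynomial.eval_mul, Polynomial.eval_C, hT j hjK]
  have hsum : ∑ j ∈ s, |a j| = e * (Polynomial.Chebyshev.T ℝ (K:ℤ)).eval z0 := by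
    rw [hT_eq, Finset.mul_sum]
    refine Finset.sum_congr rfl fun j hj => ?_
    rw [key j hj]; ring
  have he1 : |e| = 1 := by
    have hsga : |sg| = 1 := by
      rcases le_or_gt 0 z0 with h | h
      · simp [hsg, h]
      · simp only [hsg, if_neg (not_le.mpr h)]; simp
    rw [he, abs_pow, hsga, one_pow]
  have habsT : |(Polynomial.Chebyshev.T ℝ (K:ℤ)).eval z0| = ∑ j ∈ s, |a j| := by
    calc |(Polynomial.Chebyshev.T ℝ (K:ℤ)).eval z0|
        = |e| * |(Polynomial.Chebyshev.T ℝ (K:ℤ)).eval z0| := by rw [he1, one_mul]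
      _ = |e * (Polynomial.Chebyshev.T ℝ (K:ℤ)).eval z0| := (abs_mul _ _).symm
      _ = ∑ j ∈ s, |a j| := by
          rw [← hsum]
          exact abs_of_nonneg (Finset.sum_nonneg fun _ _ => abs_nonneg _)
  calc |p.eval z0| = |∑ j ∈ s, p.eval (v j) * a j| := by rw [hp_eq]
    _ ≤ ∑ j ∈ s, |p.eval (v j) * a j| := Finset.abs_sum_le_sum_abs _ _
    _ = ∑ j ∈ s, |p.eval (v j)| * |a j| := by simp [abs_mul]
    _ ≤ ∑ j ∈ s, M * |a j| := Finset.sum_le_sum fun j _ =>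
        mul_le_mul_of_nonneg_right (hMle _ (hmem j)) (abs_nonneg _)
    _ = M * ∑ j ∈ s, |a j| := (Finset.mul_sum _ _ _).symm
    _ = M * |(Polynomial.Chebyshev.T ℝ (K:ℤ)).eval z0| := by rw [habsT]
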